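/- arXiv:1006.4709 — 2 statements merged into one kernel-verified Lean document; each statement's English description precedes it below -/
import Mathlib

section
/- Let s ∈ S and let I ⊆ S be the connected component of the odd Coxeter graph Γ^odd containing s. Then for every w ∈ W, the support of w·α_s intersects I nontrivially: supp(w·α_s) ∩ I ≠ ∅. -/
namespace CoxPaper

variable {B W : Type*} [Group W]

/-- The geometric representation space of a Coxeter system with generators indexed by `B`. -/
abbrev V (B : Type*) := B →₀ ℝ

/-- The simple root corresponding to the index `i`. -/
noncomputable def sroot (i : B) : V B := Finsupp.single i 1

/-- The canonical bilinear form on `V B` determined by a Coxeter matrix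
(`M i j = 0` encodes `m(s_i, s_j) = ∞`). -/
noncomputable def form (M : CoxeterMatrix B) (x y : V B) : ℝ :=
  x.sum fun i xi => y.sum fun j yj =>
    xi * yj * (if M i j = 0 then -1 else -Real.cos (Real.pi / (M i j : ℝ)))

/-- `ρ` is the geometric representation of the Coxeter system `cs`. -/
def IsGeomRep (M : CoxeterMatrix B) (cs : CoxeterSystem M W)
    (rho : W →* (V B ≃ₗ[ℝ] V B)) : Prop :=
  ∀ (i : B) (x : V B), rho (cs.simple i) x = x - (2 * form M x (sroot i)) • sroot i

variable {M : CoxeterMatrix B}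

/-- The root system `Φ`: the orbit of the simple roots. -/
def Roots (rho : W →* (V B ≃ₗ[ℝ] V B)) : Set (V B) :=
  {v | ∃ (w : W) (i : B), rho w (sroot i) = v}

/-- A positive root: a root all of whose coordinates are nonnegative. -/
def IsPosRoot (rho : W →* (V B ≃ₗ[ℝ] V B)) (v : V B) : Prop :=
  v ∈ Roots rho ∧ ∀ i, 0 ≤ v i

/-- `t` is the reflection `s_γ` corresponding to the root `γ`. -/
def ReflOf (cs : CoxeterSystem M W) (rho : W →* (V B ≃ₗ[ℝ] V B))
    (γ : V B) (t : W) : Prop :=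
  ∃ (w : W) (i : B), rho w (sroot i) = γ ∧ w * cs.simple i * w⁻¹ = t

/-- A reflection subgroup: a subgroup generated by reflections. -/
def IsReflSubgroup (cs : CoxeterSystem M W) (G : Subgroup W) : Prop :=
  ∃ T : Set W, (∀ t ∈ T, cs.IsReflection t) ∧ G = Subgroup.closure T

/-- `Φ(G)`: the set of roots whose reflections lie in `G`. -/
def RootsOf (cs : CoxeterSystem M W) (rho : W →* (V B ≃ₗ[ℝ] V B))
    (G : Subgroup W) : Set (V B) :=
  {γ | γ ∈ Roots rho ∧ ∃ t ∈ G, ReflOf cs rho γ t}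

/-- `Π(G)`: the canonical simple system of a reflection subgroup `G`, i.e. the
positive roots of `Φ(G)` that are indecomposable into positive linear combinations
of positive roots of `Φ(G)`. -/
def SimpleOf (cs : CoxeterSystem M W) (rho : W →* (V B ≃ₗ[ℝ] V B))
    (G : Subgroup W) : Set (V B) :=
  {γ | γ ∈ RootsOf cs rho G ∧ IsPosRoot rho γ ∧
    ∀ (k : ℕ) (c : Fin k → ℝ) (β : Fin k → V B),
      (∀ m, 0 < c m) → (∀ m, β m ∈ RootsOf cs rho G ∧ IsPosRoot rho (β m)) →
      γ = ∑ m, c m • β m → ∀ m, β m = γ}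

/-- `S(G)`: the canonical generating set of a reflection subgroup `G`. -/
def CanGens (cs : CoxeterSystem M W) (rho : W →* (V B ≃ₗ[ℝ] V B))
    (G : Subgroup W) : Set W :=
  {t | ∃ γ ∈ SimpleOf cs rho G, ReflOf cs rho γ t}

/-- The standard parabolic subgroup `W_I`. -/
def WI (cs : CoxeterSystem M W) (I : Set B) : Subgroup W :=
  Subgroup.closure (cs.simple '' I)

/-- The conjugate `w H w⁻¹` of a subgroup `H`. -/
def conjSub (w : W) (H : Subgroup W) : Subgroup W :=
  Subgroup.map (MulAut.conj w).toMonoidHom H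

/-- A parabolic subgroup: a conjugate of a standard parabolic subgroup. -/
def IsParabolic (cs : CoxeterSystem M W) (P : Subgroup W) : Prop :=
  ∃ (w : W) (I : Set B), P = conjSub w (WI cs I)

/-- A parabolic subgroup of finite rank `n`. -/
def IsParabolicOfRank (cs : CoxeterSystem M W) (n : ℕ) (P : Subgroup W) : Prop :=
  ∃ (w : W) (I : Finset B), I.card = n ∧ P = conjSub w (WI cs (↑I : Set B))

/-- A locally parabolic subgroup: a reflection subgroup each finite subset of whose
canonical generating set is conjugate in `W` to a subset of `S`. -/
def IsLocallyParabolic (cs : CoxeterSystem M W) (rho : W →* (V B ≃ₗ[ℝ] V B))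
    (G : Subgroup W) : Prop :=
  IsReflSubgroup cs G ∧ ∀ X : Finset W, (↑X : Set W) ⊆ CanGens cs rho G →
    ∃ w : W, (fun t => w * t * w⁻¹) '' (↑X : Set W) ⊆ Set.range cs.simple



/-! ### Auxiliary development for `stmt10` -/

section Stmt10Aux

open CoxeterSystem List

/-- The entries of the bilinear form on simple roots. -/
noncomputable def kk (M : CoxeterMatrix B) (a b : B) : ℝ :=
  if M a b = 0 then -1 else -Real.cos (Real.pi / (M a b : ℝ))

lemma kk_symm (M : CoxeterMatrix B) (a b : B) : kk M a b = kk M b a := by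
  rw [kk, kk, M.symmetric]

lemma kk_diag (M : CoxeterMatrix B) (a : B) : kk M a a = 1 := by
  rw [kk]
  simp [M.diagonal a, Real.cos_pi]

lemma form_def (x y : V B) :
    form M x y = x.sum fun a xa => y.sum fun b yb => xa * yb * kk M a b := rfl

lemma form_sroot_right (x : V B) (a : B) :
    form M x (sroot a) = x.sum fun b xb => xb * kk M b a := by
  rw [form_def]
  refine Finsupp.sum_congr fun b _ => ?_
  rw [sroot, Finsupp.sum_single_index (by ring)]
  ring

lemma smul_sroot (a : B) (c : ℝ) : c • sroot a = Finsupp.single a c := by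
  rw [sroot, Finsupp.smul_single]
  norm_num

lemma form_pair_sroot {i j : B} (A Bc : ℝ) (a : B) :
    form M (Finsupp.single i A + Finsupp.single j Bc) (sroot a)
      = A * kk M i a + Bc * kk M j a := by
  rw [form_sroot_right, Finsupp.sum_add_index' (fun b => by ring) (fun b x y => by ring),
    Finsupp.sum_single_index (by ring), Finsupp.sum_single_index (by ring)]

lemma mulEquiv_apply (e₁ e₂ : V B ≃ₗ[ℝ] V B) (x : V B) : (e₁ * e₂) x = e₁ (e₂ x) := rfl

variable {M : CoxeterMatrix B}

lemma rho_pair_left {cs : CoxeterSystem M W} {rho : W →* (V B ≃ₗ[ℝ] V B)}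
    (hrho : IsGeomRep M cs rho) (i j : B) (A Bc : ℝ) :
    rho (cs.simple i) (Finsupp.single i A + Finsupp.single j Bc)
      = (Finsupp.single i ((-2 * kk M i j) * Bc - A - 2 * Bc * (kk M j i - kk M i j))
          + Finsupp.single j Bc) := by
  rw [hrho i _, form_pair_sroot, kk_diag, smul_sroot]
  have : Finsupp.single i ((-2 * kk M i j) * Bc - A - 2 * Bc * (kk M j i - kk M i j))
      = Finsupp.single i A - Finsupp.single i (2 * (A * 1 + Bc * kk M j i)) := by
    rw [← Finsupp.single_sub]
    congr 1
    ring
  rw [this]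
  abel

lemma rho_pair_i {cs : CoxeterSystem M W} {rho : W →* (V B ≃ₗ[ℝ] V B)}
    (hrho : IsGeomRep M cs rho) (i j : B) (A Bc : ℝ) :
    rho (cs.simple i) (Finsupp.single i A + Finsupp.single j Bc)
      = Finsupp.single i ((-2 * kk M i j) * Bc - A) + Finsupp.single j Bc := by
  rw [rho_pair_left hrho i j A Bc, kk_symm M j i]
  ring_nf

lemma rho_pair_j {cs : CoxeterSystem M W} {rho : W →* (V B ≃ₗ[ℝ] V B)}
    (hrho : IsGeomRep M cs rho) (i j : B) (A Bc : ℝ) :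
    rho (cs.simple j) (Finsupp.single i A + Finsupp.single j Bc)
      = Finsupp.single i A + Finsupp.single j ((-2 * kk M i j) * A - Bc) := by
  rw [add_comm (Finsupp.single i A), add_comm (Finsupp.single i A),
    kk_symm M i j]
  exact rho_pair_i hrho j i Bc A

/-- The sine quotients appearing as coefficients of roots in dihedral groups. -/
noncomputable def SS (m : ℕ) (k : ℕ) : ℝ :=
  if m = 0 then (k : ℝ) else Real.sin (k * (Real.pi / m)) / Real.sin (Real.pi / m)

lemma sin_base_pos {m : ℕ} (hm : 2 ≤ m) : 0 < Real.sin (Real.pi / m) := by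
  apply Real.sin_pos_of_pos_of_lt_pi
  · positivity
  · apply div_lt_self Real.pi_pos
    exact_mod_cast hm

lemma SS_zero (m : ℕ) : SS m 0 = 0 := by
  rw [SS]
  split <;> simp

lemma SS_one {m : ℕ} (hm : m = 0 ∨ 2 ≤ m) : SS m 1 = 1 := by
  rw [SS]
  rcases hm with rfl | hm
  · simp
  · rw [if_neg (by omega)]
    simp only [Nat.cast_one, one_mul]
    exact div_self (ne_of_gt (sin_base_pos hm))

/-- The recursion coefficient `2cos(π/m)` (with value 2 for `m = ∞`). -/
noncomputable def cc (m : ℕ) : ℝ := if m = 0 then 2 else 2 * Real.cos (Real.pi / m)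

lemma cc_eq_kk (i j : B) : cc (M i j) = -2 * kk M i j := by
  rw [cc, kk]
  split <;> ring

lemma SS_rec (m : ℕ) (k : ℕ) : SS m (k + 2) = cc m * SS m (k + 1) - SS m k := by
  rw [SS, SS, SS, cc]
  rcases eq_or_ne m 0 with rfl | hm
  · simp only [if_pos rfl]
    push_cast
    ring
  · rw [if_neg hm, if_neg hm, if_neg hm, if_neg hm]
    have h1 : ((k : ℝ) + 2) * (Real.pi / m) = ((k : ℝ) + 1) * (Real.pi / m) + Real.pi / m := by
      ring
    have h2 : (k : ℝ) * (Real.pi / m) = ((k : ℝ) + 1) * (Real.pi / m) - Real.pi / m := by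
      ring
    push_cast
    rw [h1, h2, Real.sin_add, Real.sin_sub]
    ring

lemma SS_nonneg {m : ℕ} (hm : m = 0 ∨ 2 ≤ m) {k : ℕ} (hk : m = 0 ∨ k ≤ m) : 0 ≤ SS m k := by
  rw [SS]
  rcases hm with rfl | hm
  · simp
  · rw [if_neg (by omega)]
    have hk' : k ≤ m := by omega
    apply div_nonneg _ (le_of_lt (sin_base_pos hm))
    apply Real.sin_nonneg_of_nonneg_of_le_pi
    · positivity
    · rw [div_eq_mul_inv, ← mul_assoc]
      calc (k : ℝ) * Real.pi * (m : ℝ)⁻¹ ≤ (m : ℝ) * Real.pi * (m : ℝ)⁻¹ := by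
            have : (k : ℝ) ≤ (m : ℝ) := by exact_mod_cast hk'
            have := Real.pi_pos
            apply mul_le_mul_of_nonneg_right (by nlinarith) (by positivity)
        _ = Real.pi := by
            field_simp
  
lemma SS_pos {m : ℕ} (hm : m = 0 ∨ 2 ≤ m) {k : ℕ} (hk1 : 1 ≤ k) (hk : m = 0 ∨ k < m) :
    0 < SS m k := by
  rw [SS]
  rcases hm with rfl | hm
  · simpa using by exact_mod_cast hk1
  · rw [if_neg (by omega)]
    have hk' : k < m := by omega
    apply div_pos _ (sin_base_pos hm)
    apply Real.sin_pos_of_pos_of_lt_pi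
    · positivity
    · rw [div_eq_mul_inv, ← mul_assoc]
      have hmR : (0:ℝ) < (m : ℝ) := by positivity
      calc (k : ℝ) * Real.pi * (m : ℝ)⁻¹ < (m : ℝ) * Real.pi * (m : ℝ)⁻¹ := by
            have : (k : ℝ) < (m : ℝ) := by exact_mod_cast hk'
            have := Real.pi_pos
            apply mul_lt_mul_of_pos_right (by nlinarith) (by positivity)
        _ = Real.pi := by
            field_simp


lemma rho_alt {cs : CoxeterSystem M W} {rho : W →* (V B ≃ₗ[ℝ] V B)}
    (hrho : IsGeomRep M cs rho) {i j : B} (hij : i ≠ j) :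
    ∀ l : ℕ, (M i j = 0 ∨ l + 1 ≤ M i j) →
      rho (cs.wordProd (CoxeterSystem.alternatingWord i j l)) (sroot i)
        = Finsupp.single i (if Even l then SS (M i j) (l + 1) else SS (M i j) l)
          + Finsupp.single j (if Even l then SS (M i j) l else SS (M i j) (l + 1)) := by
  have hm2 : M i j = 0 ∨ 2 ≤ M i j := by
    have := M.off_diagonal i j hij
    omega
  intro l
  induction l with
  | zero =>
    intro _
    rw [show CoxeterSystem.alternatingWord i j 0 = ([] : List B) from rfl, cs.wordProd_nil,
      map_one]
    simp only [Even.zero, if_pos, SS_zero, SS_one hm2, Finsupp.single_zero, add_zero]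
    rfl
  | succ l ihl =>
    intro hcond
    have hcond' : M i j = 0 ∨ l + 1 ≤ M i j := by omega
    rw [CoxeterSystem.alternatingWord_succ', cs.wordProd_cons, map_mul, mulEquiv_apply,
      ihl hcond']
    by_cases hev : Even l
    · rw [if_pos hev, if_pos hev, if_pos hev, rho_pair_j hrho, ← cc_eq_kk,
        if_neg (by simp [Nat.even_add_one, hev]), if_neg (by simp [Nat.even_add_one, hev])]
      have h : SS (M i j) (l + 1 + 1)
          = cc (M i j) * SS (M i j) (l + 1) - SS (M i j) l := by
        have h0 := SS_rec (M i j) l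
        rwa [show l + 2 = l + 1 + 1 by omega] at h0
      rw [h]
    · rw [if_neg hev, if_neg hev, if_neg hev, rho_pair_i hrho, ← cc_eq_kk,
        if_pos (by simpa [Nat.even_add_one] using hev),
        if_pos (by simpa [Nat.even_add_one] using hev)]
      have h : SS (M i j) (l + 1 + 1)
          = cc (M i j) * SS (M i j) (l + 1) - SS (M i j) l := by
        have h0 := SS_rec (M i j) l
        rwa [show l + 2 = l + 1 + 1 by omega] at h0
      rw [h]

/-- Words in the two letters `i`, `j`. -/
def IsIJWord (i j : B) (ω : List B) : Prop := ∀ x ∈ ω, x = i ∨ x = j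

/-- The possible lengths of `{i,j}`-words representing `d`. -/
def wSet (cs : CoxeterSystem M W) (i j : B) (d : W) : Set ℕ :=
  {n | ∃ ω : List B, IsIJWord i j ω ∧ ω.length = n ∧ cs.wordProd ω = d}

/-- The minimal length of an `{i,j}`-word representing `d`. -/
noncomputable def lI (cs : CoxeterSystem M W) (i j : B) (d : W) : ℕ :=
  sInf (wSet cs i j d)

lemma isIJWord_swap {i j : B} {ω : List B} (h : IsIJWord j i ω) : IsIJWord i j ω :=
  fun x hx => (h x hx).symm

lemma isIJWord_alternatingWord (a b : B) :
    ∀ l, IsIJWord a b (CoxeterSystem.alternatingWord a b l) := by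
  intro l
  induction l with
  | zero => intro x hx; simp [CoxeterSystem.alternatingWord] at hx
  | succ l ih =>
    intro x hx
    rw [CoxeterSystem.alternatingWord_succ'] at hx
    rcases List.mem_cons.mp hx with rfl | hx
    · by_cases h : Even l <;> simp [h]
    · exact ih x hx

lemma length_le_of_mem_wSet {cs : CoxeterSystem M W} {i j : B} {d : W} {n : ℕ}
    (h : n ∈ wSet cs i j d) : cs.length d ≤ n := by
  obtain ⟨ω, _, hlen, hprod⟩ := h
  rw [← hprod, ← hlen]
  exact cs.length_wordProd_le ω

lemma lI_le {cs : CoxeterSystem M W} {i j : B} {d : W} {n : ℕ}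
    (h : n ∈ wSet cs i j d) : lI cs i j d ≤ n := Nat.sInf_le h

lemma lI_mem {cs : CoxeterSystem M W} {i j : B} {d : W}
    (h : (wSet cs i j d).Nonempty) : lI cs i j d ∈ wSet cs i j d := Nat.sInf_mem h

lemma simple_mul_mem_wSet {cs : CoxeterSystem M W} {i j : B} {d : W} {n : ℕ} {a : B}
    (ha : a = i ∨ a = j) (h : n ∈ wSet cs i j d) : n + 1 ∈ wSet cs i j (cs.simple a * d) := by
  obtain ⟨ω, hIJ, hlen, hprod⟩ := h
  refine ⟨a :: ω, ?_, by simp [hlen], by rw [cs.wordProd_cons, hprod]⟩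
  intro x hx
  rcases List.mem_cons.mp hx with rfl | hx
  · exact ha
  · exact hIJ x hx

lemma exists_alt_step (cs : CoxeterSystem M W) {i j : B} (hij : i ≠ j) (a b x : B)
    (hab : (a = i ∧ b = j) ∨ (a = j ∧ b = i)) (hx : x = i ∨ x = j) (l : ℕ) :
    ∃ l' ≤ l + 1,
      cs.simple x * cs.wordProd (CoxeterSystem.alternatingWord a b l)
          = cs.wordProd (CoxeterSystem.alternatingWord i j l')
        ∨ cs.simple x * cs.wordProd (CoxeterSystem.alternatingWord a b l)
          = cs.wordProd (CoxeterSystem.alternatingWord j i l') := by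
  have hab' : a ≠ b := by rcases hab with ⟨rfl, rfl⟩ | ⟨rfl, rfl⟩ <;> simp [hij, hij.symm]
  by_cases hxc : x = (if Even l then b else a)
  · refine ⟨l + 1, le_refl _, ?_⟩
    have key : cs.simple x * cs.wordProd (CoxeterSystem.alternatingWord a b l)
        = cs.wordProd (CoxeterSystem.alternatingWord a b (l + 1)) := by
      rw [CoxeterSystem.alternatingWord_succ', cs.wordProd_cons, hxc]
    rcases hab with ⟨rfl, rfl⟩ | ⟨rfl, rfl⟩
    · exact Or.inl key
    · exact Or.inr key
  · rcases Nat.eq_zero_or_pos l with rfl | hl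
    · refine ⟨1, by omega, ?_⟩
      have key : ∀ c : B, cs.simple x
          * cs.wordProd (CoxeterSystem.alternatingWord a b 0)
          = cs.wordProd (CoxeterSystem.alternatingWord c x 1) := by
        intro c
        rw [show CoxeterSystem.alternatingWord a b 0 = ([] : List B) from rfl,
          show CoxeterSystem.alternatingWord c x 1 = [x] from rfl]
        simp
      rcases hx with rfl | rfl
      · exact Or.inr (key j)
      · exact Or.inl (key i)
    · obtain ⟨l'', rfl⟩ : ∃ l'', l = l'' + 1 := ⟨l - 1, by omega⟩
      have hxy : x = (if Even l'' then b else a) := by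
        have h1 : x = a ∨ x = b := by
          rcases hab with ⟨rfl, rfl⟩ | ⟨rfl, rfl⟩
          · exact hx
          · exact hx.symm
        by_cases h : Even l''
        · rw [if_pos h]
          rcases h1 with rfl | rfl
          · exact absurd (by rw [if_neg (by simp [Nat.even_add_one, h])]) hxc
          · rfl
        · rw [if_neg h]
          rcases h1 with rfl | rfl
          · rfl
          · exact absurd (by rw [if_pos (by simpa [Nat.even_add_one] using h)]) hxc
      refine ⟨l'', by omega, ?_⟩
      have key : cs.simple x * cs.wordProd (CoxeterSystem.alternatingWord a b (l'' + 1))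
          = cs.wordProd (CoxeterSystem.alternatingWord a b l'') := by
        rw [CoxeterSystem.alternatingWord_succ', cs.wordProd_cons, ← hxy,
          cs.simple_mul_simple_cancel_left]
      rcases hab with ⟨rfl, rfl⟩ | ⟨rfl, rfl⟩
      · exact Or.inl key
      · exact Or.inr key

lemma exists_alt (cs : CoxeterSystem M W) {i j : B} (hij : i ≠ j) :
    ∀ ω : List B, IsIJWord i j ω → ∃ l ≤ ω.length,
      cs.wordProd ω = cs.wordProd (CoxeterSystem.alternatingWord i j l)
      ∨ cs.wordProd ω = cs.wordProd (CoxeterSystem.alternatingWord j i l) := by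
  intro ω
  induction ω with
  | nil => intro _; exact ⟨0, by simp, Or.inl rfl⟩
  | cons x ω ih =>
    intro hIJ
    have hx : x = i ∨ x = j := hIJ x List.mem_cons_self
    obtain ⟨l, hl, hcase⟩ := ih (fun y hy => hIJ y (List.mem_cons_of_mem _ hy))
    rw [cs.wordProd_cons]
    rcases hcase with heq | heq
    · obtain ⟨l', hl', hc⟩ := exists_alt_step cs hij i j x (Or.inl ⟨rfl, rfl⟩) hx l
      rw [heq]
      exact ⟨l', by simpa using le_trans hl' (by omega), hc⟩
    · obtain ⟨l', hl', hc⟩ := exists_alt_step cs hij j i x (Or.inr ⟨rfl, rfl⟩) hx l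
      rw [heq]
      exact ⟨l', by simpa using le_trans hl' (by omega), hc⟩

lemma wordProd_alt_period (cs : CoxeterSystem M W) (i j : B) (k : ℕ) :
    cs.wordProd (CoxeterSystem.alternatingWord i j (k + 2 * M i j))
      = cs.wordProd (CoxeterSystem.alternatingWord i j k) := by
  rw [cs.prod_alternatingWord_eq_mul_pow, cs.prod_alternatingWord_eq_mul_pow]
  have h2 : (k + 2 * M i j) / 2 = k / 2 + M i j := by omega
  have h1 : Even (k + 2 * M i j) ↔ Even k := by
    simp [Nat.even_add]
  rw [h2, pow_add, cs.simple_mul_simple_pow i j, mul_one, if_congr h1 rfl rfl]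


lemma main_induction {cs : CoxeterSystem M W} {rho : W →* (V B ≃ₗ[ℝ] V B)}
    (hrho : IsGeomRep M cs rho) :
    ∀ n : ℕ, ∀ w : W, ∀ i : B, cs.length w = n →
      cs.length w < cs.length (w * cs.simple i) →
      (∀ t : B, 0 ≤ (rho w (sroot i)) t) ∧
      ∃ t : B, Relation.ReflTransGen (fun a b : B => a ≠ b ∧ Odd (M a b)) i t ∧
        (rho w (sroot i)) t ≠ 0 := by
  classical
  intro n
  induction n using Nat.strong_induction_on with
  | _ n IH =>
  intro w i hn hasc
  rcases eq_or_ne w 1 with rfl | hw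
  · rw [map_one]
    have h1 : ((1 : V B ≃ₗ[ℝ] V B)) (sroot i) = sroot i := rfl
    rw [h1]
    constructor
    · intro t
      rw [sroot, Finsupp.single_apply]
      split <;> norm_num
    · refine ⟨i, Relation.ReflTransGen.refl, ?_⟩
      rw [sroot, Finsupp.single_apply, if_pos rfl]
      norm_num
  · obtain ⟨j, hj⟩ := cs.exists_rightDescent_of_ne_one hw
    have hdesc : cs.length (w * cs.simple j) < cs.length w := hj
    have hij : i ≠ j := by
      rintro rfl
      exact absurd hasc (not_lt.mpr (le_of_lt hdesc))
    have hm2 : M i j = 0 ∨ 2 ≤ M i j := by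
      have := M.off_diagonal i j hij
      omega
    have hwj : cs.length (w * cs.simple j) + 1 = cs.length w := by
      rcases cs.length_mul_simple w j with h | h
      · omega
      · exact h
    set Ap : W → Prop := fun v =>
      (wSet cs i j (v⁻¹ * w)).Nonempty ∧
        cs.length v + lI cs i j (v⁻¹ * w) = cs.length w with hApdef
    have hApwj : Ap (w * cs.simple j) := by
      have heq : (w * cs.simple j)⁻¹ * w = cs.simple j := by
        rw [mul_inv_rev, cs.inv_simple, mul_assoc, inv_mul_cancel, mul_one]
      have hmem : 1 ∈ wSet cs i j ((w * cs.simple j)⁻¹ * w) := by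
        refine ⟨[j], ?_, by simp, ?_⟩
        · intro x hx
          exact Or.inr (List.mem_singleton.mp hx)
        · rw [cs.wordProd_singleton, heq]
      have hle : lI cs i j ((w * cs.simple j)⁻¹ * w) ≤ 1 := lI_le hmem
      have hge : 1 ≤ lI cs i j ((w * cs.simple j)⁻¹ * w) := by
        have h := length_le_of_mem_wSet (lI_mem ⟨1, hmem⟩)
        calc 1 = cs.length ((w * cs.simple j)⁻¹ * w) := by rw [heq, cs.length_simple]
          _ ≤ _ := h
      exact ⟨⟨1, hmem⟩, by omega⟩
    have hKne : {k : ℕ | ∃ v, Ap v ∧ cs.length v = k}.Nonempty :=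
      ⟨cs.length (w * cs.simple j), w * cs.simple j, hApwj, rfl⟩
    obtain ⟨v, hvA, hvlen⟩ := Nat.sInf_mem hKne
    have hvmin : ∀ v', Ap v' → cs.length v ≤ cs.length v' := by
      intro v' h
      rw [hvlen]
      exact Nat.sInf_le ⟨v', h, rfl⟩
    have hvlt : cs.length v < cs.length w := by
      have := hvmin _ hApwj
      omega
    obtain ⟨hdne, hadd⟩ := hvA
    set d := v⁻¹ * w with hd
    have hvdw : v * d = w := by rw [hd, mul_inv_cancel_left]
    have hnodesc : ∀ a : B, a = i ∨ a = j →
        cs.length v < cs.length (v * cs.simple a) := by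
      intro a ha
      by_contra hcon
      have hlt : cs.length (v * cs.simple a) + 1 = cs.length v := by
        rcases cs.length_mul_simple v a with h | h
        · omega
        · exact h
      have hv'd : (v * cs.simple a)⁻¹ * w = cs.simple a * d := by
        rw [hd, mul_inv_rev, cs.inv_simple, mul_assoc]
      have hmem' : lI cs i j d + 1 ∈ wSet cs i j ((v * cs.simple a)⁻¹ * w) := by
        rw [hv'd]
        exact simple_mul_mem_wSet ha (lI_mem hdne)
      have hlow : cs.length w ≤ cs.length (v * cs.simple a)
          + lI cs i j ((v * cs.simple a)⁻¹ * w) := by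
        calc cs.length w = cs.length ((v * cs.simple a) * ((v * cs.simple a)⁻¹ * w)) := by
              rw [mul_inv_cancel_left]
          _ ≤ cs.length (v * cs.simple a) + cs.length ((v * cs.simple a)⁻¹ * w) :=
              cs.length_mul_le _ _
          _ ≤ _ := by
              have := length_le_of_mem_wSet (lI_mem ⟨_, hmem'⟩)
              omega
      have hup : lI cs i j ((v * cs.simple a)⁻¹ * w) ≤ lI cs i j d + 1 := lI_le hmem'
      have hA' : Ap (v * cs.simple a) := ⟨⟨_, hmem'⟩, by omega⟩
      have := hvmin _ hA'
      omega
    obtain ⟨ω₀, hω₀IJ, hω₀len, hω₀prod⟩ := lI_mem hdne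
    set l := lI cs i j d with hldef
    have hcontra : ∀ l₁ : ℕ, l₁ + 1 = l →
        cs.wordProd (CoxeterSystem.alternatingWord j i l) = d → False := by
      intro l₁ hl₁ hrep
      have hds : d * cs.simple i = cs.wordProd (CoxeterSystem.alternatingWord i j l₁) := by
        rw [← hrep, ← hl₁, CoxeterSystem.alternatingWord_succ, cs.wordProd_concat,
          cs.simple_mul_simple_cancel_right]
      have hli : cs.length (d * cs.simple i) ≤ l₁ := by
        rw [hds]
        calc cs.length _ ≤ (CoxeterSystem.alternatingWord i j l₁).length :=
              cs.length_wordProd_le _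
          _ = l₁ := CoxeterSystem.length_alternatingWord i j l₁
      have hfin : cs.length (w * cs.simple i) ≤ cs.length v + l₁ := by
        calc cs.length (w * cs.simple i) = cs.length (v * (d * cs.simple i)) := by
              rw [← hvdw, mul_assoc]
          _ ≤ cs.length v + cs.length (d * cs.simple i) := cs.length_mul_le _ _
          _ ≤ cs.length v + l₁ := by omega
      omega
    obtain ⟨l', hl'le, hcase⟩ := exists_alt cs hij ω₀ hω₀IJ
    rw [hω₀prod] at hcase
    have hl'ge : l ≤ l' := by
      rcases hcase with h | h
      · exact lI_le ⟨_, isIJWord_alternatingWord i j l',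
          CoxeterSystem.length_alternatingWord i j l', h.symm⟩
      · exact lI_le ⟨_, isIJWord_swap (isIJWord_alternatingWord j i l'),
          CoxeterSystem.length_alternatingWord j i l', h.symm⟩
    have hl'eq : l' = l := by omega
    rw [hl'eq] at hcase
    have hdalt : cs.wordProd (CoxeterSystem.alternatingWord i j l) = d := by
      rcases hcase with h | h
      · exact h.symm
      · rcases Nat.eq_zero_or_pos l with h0 | hpos
        · rw [h0] at h ⊢
          exact h.symm
        · exact (hcontra (l - 1) (by omega) h.symm).elim
    have hbound : M i j = 0 ∨ l + 1 ≤ M i j := by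
      by_contra hcon
      push_neg at hcon
      obtain ⟨hm0, hlgem⟩ := hcon
      have hlm : M i j ≤ l := by omega
      rcases le_or_gt l (M i j * 2) with hle2 | hgt2
      · have hsub := cs.prod_alternatingWord_eq_prod_alternatingWord_sub i j l hle2
        rcases eq_or_ne l (M i j) with heq | hne
        · refine hcontra (M i j - 1) (by omega) ?_
          have e : M i j * 2 - l = l := by omega
          rw [← e, ← hsub]
          exact hdalt
        · have hshort : lI cs i j d ≤ M i j * 2 - l := by
            refine lI_le ⟨_, isIJWord_swap (isIJWord_alternatingWord j i _),
              CoxeterSystem.length_alternatingWord j i _, ?_⟩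
            rw [← hsub]
            exact hdalt
          omega
      · have hshort : lI cs i j d ≤ l - 2 * M i j := by
          refine lI_le ⟨_, isIJWord_alternatingWord i j _,
            CoxeterSystem.length_alternatingWord i j _, ?_⟩
          rw [← wordProd_alt_period cs i j (l - 2 * M i j),
            show l - 2 * M i j + 2 * M i j = l by omega]
          exact hdalt
        omega
    have hroot := rho_alt hrho hij l hbound
    rw [hdalt] at hroot
    set Al := (if Even l then SS (M i j) (l + 1) else SS (M i j) l) with hAldef
    set Bl := (if Even l then SS (M i j) l else SS (M i j) (l + 1)) with hBldef
    have hAlnn : 0 ≤ Al := by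
      rw [hAldef]
      split
      · exact SS_nonneg hm2 (by omega)
      · exact SS_nonneg hm2 (by omega)
    have hBlnn : 0 ≤ Bl := by
      rw [hBldef]
      split
      · exact SS_nonneg hm2 (by omega)
      · exact SS_nonneg hm2 (by omega)
    have hAlodd : Al = 0 → Odd (M i j) := by
      intro h0
      rw [hAldef] at h0
      by_cases hev : Even l
      · rw [if_pos hev] at h0
        rcases hbound with hm0 | hlb
        · exact absurd h0 (ne_of_gt (SS_pos (Or.inl hm0) (by omega) (Or.inl hm0)))
        · rcases eq_or_lt_of_le hlb with heq | hlt
          · rw [← heq]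
            exact hev.add_one
          · exact absurd h0 (ne_of_gt (SS_pos hm2 (by omega) (Or.inr hlt)))
      · rw [if_neg hev] at h0
        have hl1 : 1 ≤ l := by
          rcases Nat.eq_zero_or_pos l with h00 | h00
          · exact absurd (h00 ▸ Even.zero) hev
          · exact h00
        rcases hbound with hm0 | hlb
        · exact absurd h0 (ne_of_gt (SS_pos (Or.inl hm0) hl1 (Or.inl hm0)))
        · exact absurd h0 (ne_of_gt (SS_pos hm2 hl1 (Or.inr (by omega))))
    have hsplit : rho w (sroot i)
        = Al • (rho v (sroot i)) + Bl • (rho v (sroot j)) := by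
      rw [← hvdw, map_mul, mulEquiv_apply, hroot, ← smul_sroot i Al, ← smul_sroot j Bl,
        map_add, map_smul, map_smul]
    obtain ⟨hP, t1, ht1R, ht1⟩ := IH (cs.length v) (by omega) v i rfl (hnodesc i (Or.inl rfl))
    obtain ⟨hQ, t2, ht2R, ht2⟩ := IH (cs.length v) (by omega) v j rfl (hnodesc j (Or.inr rfl))
    have happ : ∀ t, (rho w (sroot i)) t
        = Al * (rho v (sroot i)) t + Bl * (rho v (sroot j)) t := by
      intro t
      rw [hsplit]
      simp
    constructor
    · intro t
      rw [happ t]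
      exact add_nonneg (mul_nonneg hAlnn (hP t)) (mul_nonneg hBlnn (hQ t))
    · by_cases hA0 : Al = 0
      · have hodd := hAlodd hA0
        have hBl0 : Bl ≠ 0 := by
          intro hB0
          have hz : rho w (sroot i) = 0 := by
            rw [hsplit, hA0, hB0]
            simp
          have h1 : sroot i = (0 : V B) := (LinearEquiv.map_eq_zero_iff (rho w)).mp hz
          have h2 : (sroot i) i = 0 := by rw [h1]; rfl
          rw [sroot, Finsupp.single_apply, if_pos rfl] at h2
          norm_num at h2
        refine ⟨t2, Relation.ReflTransGen.head ⟨hij, hodd⟩ ht2R, ?_⟩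
        rw [happ t2, hA0]
        have hq2 : 0 < (rho v (sroot j)) t2 := lt_of_le_of_ne (hQ t2) (Ne.symm ht2)
        have hb : 0 < Bl := lt_of_le_of_ne hBlnn (Ne.symm hBl0)
        have hpos : (0:ℝ) < 0 * (rho v (sroot i)) t2 + Bl * (rho v (sroot j)) t2 := by
          nlinarith
        exact (ne_of_lt hpos).symm
      · refine ⟨t1, ht1R, ?_⟩
        rw [happ t1]
        have hp1 : 0 < (rho v (sroot i)) t1 := lt_of_le_of_ne (hP t1) (Ne.symm ht1)
        have ha : 0 < Al := lt_of_le_of_ne hAlnn (Ne.symm hA0)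
        have hb2 : 0 ≤ Bl * (rho v (sroot j)) t1 := mul_nonneg hBlnn (hQ t1)
        have hpos : (0:ℝ) < Al * (rho v (sroot i)) t1 + Bl * (rho v (sroot j)) t1 := by
          nlinarith
        exact (ne_of_lt hpos).symm

end Stmt10Aux

/-- For `s ∈ S` and any `w ∈ W`, the support of `w • α_s` meets the connected
component of the odd Coxeter graph containing `s`. -/
theorem stmt10 (M : CoxeterMatrix B) (cs : CoxeterSystem M W)
    (rho : W →* (V B ≃ₗ[ℝ] V B)) (hrho : IsGeomRep M cs rho) (s : B) (w : W) :
    ∃ t : B, Relation.ReflTransGen (fun a b : B => a ≠ b ∧ Odd (M a b)) s t ∧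
      (rho w (sroot s)) t ≠ 0 := by
  rcases lt_or_gt_of_ne (cs.length_mul_simple_ne w s) with hlt | hgt
  · have hasc : cs.length (w * cs.simple s)
        < cs.length ((w * cs.simple s) * cs.simple s) := by
      rw [cs.simple_mul_simple_cancel_right]
      exact hlt
    obtain ⟨_, t, htR, ht⟩ := main_induction hrho (cs.length (w * cs.simple s))
      (w * cs.simple s) s rfl hasc
    refine ⟨t, htR, ?_⟩
    have hneg : rho w (sroot s) = - rho (w * cs.simple s) (sroot s) := by
      have hww : w = (w * cs.simple s) * cs.simple s := by
        rw [cs.simple_mul_simple_cancel_right]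
      have hss : rho (cs.simple s) (sroot s) = - sroot s := by
        rw [hrho s (sroot s), form_sroot_right, sroot,
          Finsupp.sum_single_index (by ring), kk_diag, one_mul, ← sroot]
        rw [show ((2:ℝ) * 1) = 2 by norm_num, two_smul]
        abel
      conv_lhs => rw [hww]
      rw [map_mul, mulEquiv_apply, hss, map_neg]
    rw [hneg]
    simpa using ht
  · obtain ⟨_, t, htR, ht⟩ := main_induction hrho (cs.length w) w s rfl hgt
    exact ⟨t, htR, ht⟩

end CoxPaper
end

section
/- In the Coxeter group W of type A∞ with generators s₁, s₂, s₃, … (m(s_i,s_{i+1}) = 3, m(s_i,s_j) = 2 for |i−j| ≥ 2), let β_i = α_{2i−1} + α_{2i} and let u_i = (s_i s_{i−1}⋯s_1)(s_{i+1}⋯s_3)⋯(s_{2i−2}s_{2i−3})(s_{2i−1}). Then u_i · β_j = α_{j+i} and u_i s_{β_j} u_i⁻¹ = s_{j+i} for all 1 ≤ j ≤ i. -/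
namespace CoxPaper

variable {B W : Type*} [Group W]

variable {M : CoxeterMatrix B}

/-- `M` is the Coxeter matrix of type `A∞` with generators indexed by `ℕ+`. -/
def AinfMatrix (M : CoxeterMatrix ℕ+) : Prop :=
  ∀ i j : ℕ+, M i j =
    if i = j then 1 else if (i : ℕ) + 1 = (j : ℕ) ∨ (j : ℕ) + 1 = (i : ℕ) then 3 else 2

/-- The root `β_j = α_{2j-1} + α_{2j}`. -/
noncomputable def beta (j : ℕ) : V ℕ+ :=
  sroot ((2 * j - 1).toPNat') + sroot ((2 * j).toPNat')

/-- The element `u_i = (s_i s_{i-1} ⋯ s_1)(s_{i+1} ⋯ s_3) ⋯ (s_{2i-2} s_{2i-3})(s_{2i-1})`. -/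
noncomputable def uElt {W : Type*} [Group W] {M : CoxeterMatrix ℕ+}
    (cs : CoxeterSystem M W) (i : ℕ) : W :=
  ((List.range i).map fun k =>
    ((List.range (i - k)).map fun l => cs.simple (i + k - l).toPNat').prod).prod

section Aux0
variable {B W : Type*} [Group W]

variable {M : CoxeterMatrix ℕ+} (cs : CoxeterSystem M W) (hM : AinfMatrix M)

/-- simple reflection indexed by a natural number (≥ 1 intended). -/
noncomputable def sn (n : ℕ) : W := cs.simple n.toPNat'

lemma sn_coe (a : ℕ+) : sn cs (a : ℕ) = cs.simple a := by
  simp [sn]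

lemma sn_sq (n : ℕ) : sn cs n * sn cs n = 1 := cs.simple_mul_simple_self _

lemma sn_sq' (n : ℕ) (x : W) : sn cs n * (sn cs n * x) = x := by
  rw [← mul_assoc, sn_sq, one_mul]

lemma sn_inv (n : ℕ) : (sn cs n)⁻¹ = sn cs n := cs.inv_simple _

include hM in
lemma M_apply_adj {a b : ℕ+} (h : (a:ℕ) + 1 = (b:ℕ)) : M a b = 3 := by
  rw [hM a b]
  have : a ≠ b := by intro hh; subst hh; omega
  simp [this, h]

include hM in
lemma M_apply_far {a b : ℕ+} (h : (a:ℕ) + 2 ≤ (b:ℕ) ∨ (b:ℕ) + 2 ≤ (a:ℕ)) : M a b = 2 := by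
  rw [hM a b]
  have h1 : a ≠ b := by intro hh; subst hh; omega
  have h2 : ¬ ((a : ℕ) + 1 = (b : ℕ) ∨ (b : ℕ) + 1 = (a : ℕ)) := by omega
  simp [h1, h2]

include hM in
lemma braid_pnat {a b : ℕ+} (h : (a:ℕ) + 1 = (b:ℕ)) :
    cs.simple a * cs.simple b * cs.simple a = cs.simple b * cs.simple a * cs.simple b := by
  have h3 : (cs.simple a * cs.simple b) ^ 3 = 1 := by
    have := cs.simple_mul_simple_pow a b
    rwa [M_apply_adj hM h] at this
  have e : cs.simple a * cs.simple b * cs.simple a * (cs.simple b * cs.simple a * cs.simple b)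
      = (cs.simple a * cs.simple b) ^ 3 := by
    rw [pow_succ, pow_succ, pow_one]
    simp [mul_assoc]
  rw [h3] at e
  have := mul_eq_one_iff_eq_inv.mp e
  rw [this]
  simp [mul_inv_rev, cs.inv_simple, mul_assoc]

include hM in
lemma comm_pnat {a b : ℕ+} (h : (a:ℕ) + 2 ≤ (b:ℕ) ∨ (b:ℕ) + 2 ≤ (a:ℕ)) :
    cs.simple a * cs.simple b = cs.simple b * cs.simple a := by
  have h2 : (cs.simple a * cs.simple b) ^ 2 = 1 := by
    have := cs.simple_mul_simple_pow a b
    rwa [M_apply_far hM h] at this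
  have e : cs.simple a * cs.simple b * (cs.simple a * cs.simple b)
      = (cs.simple a * cs.simple b) ^ 2 := by
    rw [pow_succ, pow_one]
  rw [h2] at e
  have := mul_eq_one_iff_eq_inv.mp e
  rw [this]
  simp [mul_inv_rev, cs.inv_simple]

lemma toPNat'_coe {n : ℕ} (h : 1 ≤ n) : ((n.toPNat' : ℕ+) : ℕ) = n := by
  simp [Nat.toPNat']; omega

include hM in
lemma braidN {a : ℕ} (h : 1 ≤ a) :
    sn cs a * sn cs (a+1) * sn cs a = sn cs (a+1) * sn cs a * sn cs (a+1) := by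
  apply braid_pnat cs hM
  rw [toPNat'_coe h, toPNat'_coe (by omega)]

include hM in
lemma commN {a b : ℕ} (ha : 1 ≤ a) (hb : 1 ≤ b) (h : a + 2 ≤ b ∨ b + 2 ≤ a) :
    sn cs a * sn cs b = sn cs b * sn cs a := by
  apply comm_pnat cs hM
  rw [toPNat'_coe ha, toPNat'_coe hb]
  exact h
end Aux0

section Aux1
lemma comm_mul {G : Type*} [Group G] {c x y : G} (hx : c*x = x*c) (hy : c*y = y*c) :
    c*(x*y) = (x*y)*c := by
  rw [← mul_assoc, hx, mul_assoc, hy, ← mul_assoc]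

lemma sandwich {G : Type*} [Group G] (a Q X : G) (h : a*Q = Q*a) :
    a * (Q * X * Q) * a = Q * (a * X * a) * Q := by
  have h1 : a * (Q * X * Q) * a = (a * Q) * X * (Q * a) := by simp only [mul_assoc]
  have h2 : Q * (a * X * a) * Q = (Q * a) * X * (a * Q) := by simp only [mul_assoc]
  rw [h1, h2]
  conv_lhs => rw [h]
  conv_rhs => rw [h]

variable {B W : Type*} [Group W]
variable {M : CoxeterMatrix ℕ+} (cs : CoxeterSystem M W) (hM : AinfMatrix M)

/-- auxiliary palindromic word: `rAux p d = s_{p+1} s_{p+2} ... s_{p+d+1} ... s_{p+2} s_{p+1}`. -/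
noncomputable def rAux : ℕ → ℕ → W
  | p, 0 => sn cs (p+1)
  | p, d+1 => sn cs (p+1) * rAux (p+1) d * sn cs (p+1)

/-- the reflection word attached to the "interval root" `(p, q]`, for `p < q`. -/
noncomputable def rElt (p q : ℕ) : W := rAux cs p (q - p - 1)

lemma rElt_base (p : ℕ) : rElt cs p (p+1) = sn cs (p+1) := by
  simp [rElt, rAux]

lemma rElt_left {p q : ℕ} (h : p + 2 ≤ q) :
    rElt cs p q = sn cs (p+1) * rElt cs (p+1) q * sn cs (p+1) := by
  have h1 : q - p - 1 = (q - (p+1) - 1) + 1 := by omega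
  rw [rElt, h1, rAux, rElt]

include hM in
lemma rElt_right : ∀ d p q, q - p = d → p + 1 ≤ q →
    rElt cs p (q+1) = sn cs (q+1) * rElt cs p q * sn cs (q+1) := by
  intro d
  induction d using Nat.strong_induction_on with
  | _ d ih =>
    intro p q hd hpq
    rcases eq_or_lt_of_le hpq with h | h
    · -- q = p + 1
      have hq : q = p + 1 := by omega
      subst hq
      rw [rElt_base, rElt_left cs (by omega), rElt_base]
      exact braidN cs hM (by omega)
    · -- q ≥ p + 2
      have h2 : p + 2 ≤ q := h
      rw [rElt_left cs (by omega : p + 2 ≤ q + 1), rElt_left cs h2,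
        ih (q - (p+1)) (by omega) (p+1) q rfl (by omega)]
      exact sandwich _ _ _ (commN cs hM (by omega) (by omega) (by omega))

include hM in
lemma rElt_comm : ∀ d p q c, q - p = d → p < q → 1 ≤ c →
    c ≠ p → c ≠ p + 1 → c ≠ q → c ≠ q + 1 →
    sn cs c * rElt cs p q = rElt cs p q * sn cs c := by
  intro d
  induction d using Nat.strong_induction_on with
  | _ d ih =>
    intro p q c hd hpq hc h1 h2 h3 h4
    rcases eq_or_lt_of_le (by omega : p + 1 ≤ q) with h | h
    · -- base q = p+1
      have hq : q = p + 1 := by omega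
      subst hq
      rw [rElt_base]
      exact commN cs hM hc (by omega) (by omega)
    · by_cases hcp : c = p + 2
      · -- c = p + 2
        by_cases hq4 : p + 4 ≤ q
        · -- use right recursion
          have hq1 : q = (q - 1) + 1 := by omega
          rw [hq1, rElt_right cs hM (q - 1 - p) p (q-1) rfl (by omega)]
          have hcQ : sn cs c * sn cs ((q-1)+1) = sn cs ((q-1)+1) * sn cs c :=
            commN cs hM hc (by omega) (by omega)
          have hcX := ih (q - 1 - p) (by omega) p (q-1) c rfl (by omega) hc h1 h2
            (by omega) (by omega)
          exact comm_mul (comm_mul hcQ hcX) hcQ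
        · -- q = p + 3, c = p + 2 : explicit computation
          have hq3 : q = p + 3 := by omega
          subst hq3
          subst hcp
          rw [rElt_left cs (by omega), rElt_left cs (by omega), rElt_base]
          have hba := braidN cs hM (by omega : 1 ≤ p + 1)
          rw [show p+1+1 = p+2 by omega] at hba
          have hbd := braidN cs hM (by omega : 1 ≤ p + 2)
          rw [show p+2+1 = p+3 by omega] at hbd
          have had : sn cs (p+1) * sn cs (p+3) = sn cs (p+3) * sn cs (p+1) :=
            commN cs hM (by omega) (by omega) (by omega)
          rw [show p+2+1 = p+3 by omega]
          set a := sn cs (p+1) with ha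
          set b := sn cs (p+2) with hb
          set dd := sn cs (p+3) with hdd
          have hba_assoc : ∀ X : W, a*(b*(a*X)) = b*(a*(b*X)) := by
            intro X
            have := congrArg (· * X) hba
            simpa [mul_assoc] using this
          have had_assoc : ∀ Y : W, a*(dd*Y) = dd*(a*Y) := by
            intro Y
            rw [← mul_assoc, had, mul_assoc]
          have ha3 : a*(b*a) = b*(a*b) := by simpa [mul_assoc] using hba
          simp only [mul_assoc]
          rw [← hba_assoc, had_assoc, ha3]
      · -- c ∉ {p, p+1, p+2} : use left recursion
        rw [rElt_left cs (by omega)]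
        have hcA : sn cs c * sn cs (p+1) = sn cs (p+1) * sn cs c :=
          commN cs hM hc (by omega) (by omega)
        have hcX := ih (q - (p+1)) (by omega) (p+1) q c rfl (by omega) hc h2
          (by omega) h3 h4
        exact comm_mul (comm_mul hcA hcX) hcA

/-- symmetric version -/
noncomputable def rSym (p q : ℕ) : W := rElt cs (min p q) (max p q)
end Aux1

section Aux2
open Equiv

lemma swap3 {a b c : ℕ} (hab : a ≠ b) (hbc : b ≠ c) (hac : a ≠ c) :
    (Equiv.swap a b * Equiv.swap b c) ^ 3 = 1 := by
  set s := Equiv.swap a b * Equiv.swap b c with hs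
  have ea : s a = b := by
    rw [hs, Equiv.Perm.mul_apply, Equiv.swap_apply_of_ne_of_ne hab hac, Equiv.swap_apply_left]
  have eb : s b = c := by
    rw [hs, Equiv.Perm.mul_apply, Equiv.swap_apply_left,
      Equiv.swap_apply_of_ne_of_ne (Ne.symm hac) (Ne.symm hbc)]
  have ec : s c = a := by
    rw [hs, Equiv.Perm.mul_apply, Equiv.swap_apply_right, Equiv.swap_apply_right]
  have ex : ∀ x, x ≠ a → x ≠ b → x ≠ c → s x = x := by
    intro x h1 h2 h3
    simp [hs, Equiv.Perm.mul_apply, Equiv.swap_apply_of_ne_of_ne h2 h3,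
      Equiv.swap_apply_of_ne_of_ne h1 h2]
  ext x
  have : (s ^ 3) x = s (s (s x)) := by
    simp [pow_succ, Equiv.Perm.mul_apply]
  rw [this]
  by_cases h1 : x = a
  · subst h1; rw [ea, eb, ec]; rfl
  by_cases h2 : x = b
  · subst h2; rw [eb, ec, ea]; rfl
  by_cases h3 : x = c
  · subst h3; rw [ec, ea, eb]; rfl
  · rw [ex x h1 h2 h3, ex x h1 h2 h3, ex x h1 h2 h3]; rfl

lemma swap2 {a b c d : ℕ} (h1 : a ≠ c) (h2 : a ≠ d) (h3 : b ≠ c) (h4 : b ≠ d) :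
    (Equiv.swap a b * Equiv.swap c d) ^ 2 = 1 := by
  have hdisj : (Equiv.swap a b).Disjoint (Equiv.swap c d) := by
    intro x
    by_cases hx1 : x = a
    · subst hx1; right; exact Equiv.swap_apply_of_ne_of_ne h1 h2
    by_cases hx2 : x = b
    · subst hx2; right; exact Equiv.swap_apply_of_ne_of_ne h3 h4
    · left; exact Equiv.swap_apply_of_ne_of_ne hx1 hx2
  have hcomm : Commute (Equiv.swap a b) (Equiv.swap c d) := hdisj.commute
  rw [hcomm.mul_pow, sq, sq, Equiv.swap_mul_self, Equiv.swap_mul_self, one_mul]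

variable {B W : Type*} [Group W]
variable {M : CoxeterMatrix ℕ+} (cs : CoxeterSystem M W) (hM : AinfMatrix M)

include hM in
lemma liftable_swaps :
    M.IsLiftable (fun i : ℕ+ => Equiv.swap ((i:ℕ) - 1) (i:ℕ) : ℕ+ → Equiv.Perm ℕ) := by
  intro i j
  show (Equiv.swap ((i:ℕ) - 1) (i:ℕ) * Equiv.swap ((j:ℕ) - 1) (j:ℕ)) ^ (M i j) = 1
  rw [hM i j]
  by_cases hij : i = j
  · subst hij
    simp only [if_pos rfl, pow_one]
    exact Equiv.swap_mul_self _ _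
  · rw [if_neg hij]
    have hi1 : 1 ≤ (i:ℕ) := i.one_le
    have hj1 : 1 ≤ (j:ℕ) := j.one_le
    have hijn : (i:ℕ) ≠ (j:ℕ) := fun h => hij (PNat.coe_injective h)
    by_cases hadj : (i : ℕ) + 1 = (j : ℕ) ∨ (j : ℕ) + 1 = (i : ℕ)
    · rw [if_pos hadj]
      rcases hadj with h | h
      · have e1 : ((j:ℕ) - 1) = (i:ℕ) := by omega
        rw [e1]
        exact swap3 (by omega) (by omega) (by omega)
      · have e1 : ((i:ℕ) - 1) = (j:ℕ) := by omega
        rw [e1, Equiv.swap_comm ((j:ℕ)) ((i:ℕ)), Equiv.swap_comm ((j:ℕ)-1) ((j:ℕ))]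
        exact swap3 (by omega) (by omega) (by omega)
    · rw [if_neg hadj]
      exact swap2 (by omega) (by omega) (by omega) (by omega)

/-- The permutation representation of the type `A∞` Coxeter group. -/
noncomputable def permRep : W →* Equiv.Perm ℕ :=
  cs.lift ⟨(fun i : ℕ+ => Equiv.swap ((i:ℕ) - 1) (i:ℕ)), liftable_swaps hM⟩

lemma permRep_simple (i : ℕ+) :
    permRep cs hM (cs.simple i) = Equiv.swap ((i:ℕ) - 1) (i:ℕ) := by
  have := cs.lift_apply_simple (liftable_swaps hM) i
  simpa [permRep] using this

lemma rSym_comm' (p q : ℕ) : rSym cs p q = rSym cs q p := by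
  rw [rSym, rSym, min_comm, max_comm]

lemma collapse (c : ℕ) (X : W) :
    sn cs c * (sn cs c * X * sn cs c) * sn cs c = X := by
  simp only [mul_assoc]
  rw [sn_sq cs c, mul_one, sn_sq' cs c]

include hM in
lemma conj_rSym_aux {c : ℕ} (hc : 1 ≤ c) {p q : ℕ} (hpq : p < q) :
    sn cs c * rSym cs (Equiv.swap (c-1) c p) (Equiv.swap (c-1) c q) * sn cs c
      = rSym cs p q := by
  obtain ⟨e, rfl⟩ : ∃ e, c = e + 1 := ⟨c - 1, by omega⟩
  simp only [Nat.add_sub_cancel]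
  by_cases hp1 : p = e
  · by_cases hq1 : q = e + 1
    · -- p = e, q = e+1 : swap exchanges them
      rw [hp1, hq1, Equiv.swap_apply_left, Equiv.swap_apply_right]
      simp only [rSym]
      rw [min_comm, max_comm, min_eq_left (by omega), max_eq_right (by omega), rElt_base]
      rw [sn_sq, one_mul]
    · -- p = e, q > e+1
      have hq2 : e + 1 < q := by omega
      rw [hp1, Equiv.swap_apply_left, Equiv.swap_apply_of_ne_of_ne (by omega) (by omega)]
      simp only [rSym]
      rw [min_eq_left (by omega), max_eq_right (by omega),
        min_eq_left (by omega), max_eq_right (by omega)]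
      rw [rElt_left cs (by omega : e + 2 ≤ q)]
  by_cases hp2 : p = e + 1
  · -- p = e+1 (then q > e+1, q ≠ e)
    rw [hp2, Equiv.swap_apply_right, Equiv.swap_apply_of_ne_of_ne (by omega) (by omega)]
    simp only [rSym]
    rw [min_eq_left (by omega), max_eq_right (by omega),
      min_eq_left (by omega), max_eq_right (by omega)]
    rw [rElt_left cs (by omega : e + 2 ≤ q)]
    exact collapse cs (e+1) _
  -- now p ∉ {e, e+1}
  rw [Equiv.swap_apply_of_ne_of_ne (by omega) (by omega)]
  by_cases hq1 : q = e
  · rw [hq1, Equiv.swap_apply_left]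
    simp only [rSym]
    rw [min_eq_left (by omega), max_eq_right (by omega),
      min_eq_left (by omega), max_eq_right (by omega)]
    rw [rElt_right cs hM (e - p) p e rfl (by omega)]
    exact collapse cs (e+1) _
  by_cases hq2 : q = e + 1
  · rw [hq2, Equiv.swap_apply_right]
    simp only [rSym]
    rw [min_eq_left (by omega), max_eq_right (by omega),
      min_eq_left (by omega), max_eq_right (by omega)]
    rw [rElt_right cs hM (e - p) p e rfl (by omega)]
  · -- disjoint
    rw [Equiv.swap_apply_of_ne_of_ne (by omega) (by omega)]
    simp only [rSym]
    rw [min_eq_left (by omega), max_eq_right (by omega)]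
    have := rElt_comm cs hM (q-p) p q (e+1) rfl hpq (by omega) (by omega) (by omega)
      (by omega) (by omega)
    rw [this, mul_assoc, sn_sq, mul_one]

include hM in
lemma conj_rSym (c : ℕ+) {p q : ℕ} (hpq : p ≠ q) :
    cs.simple c * rSym cs (Equiv.swap ((c:ℕ)-1) (c:ℕ) p) (Equiv.swap ((c:ℕ)-1) (c:ℕ) q)
      * cs.simple c = rSym cs p q := by
  have hc : 1 ≤ (c:ℕ) := c.one_le
  rw [← sn_coe cs c]
  rcases lt_or_gt_of_ne hpq with h | h
  · exact conj_rSym_aux cs hM hc h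
  · rw [rSym_comm' cs]
    rw [rSym_comm' cs p q]
    exact conj_rSym_aux cs hM hc h

/-- Key theorem: conjugate of a simple reflection is the canonical interval reflection word,
determined by the permutation representation. -/
theorem conj_simple_eq_rSym (w : W) (a : ℕ+) :
    w * cs.simple a * w⁻¹
      = rSym cs (permRep cs hM w ((a:ℕ)-1)) (permRep cs hM w (a:ℕ)) := by
  generalize hn : cs.length w = n
  induction n using Nat.strong_induction_on generalizing w with
  | _ n ih =>
    have ha1 : 1 ≤ (a:ℕ) := a.one_le
    by_cases hw : w = 1
    · subst hw
      simp only [one_mul, inv_one, mul_one, map_one, Equiv.Perm.one_apply]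
      obtain ⟨e, he⟩ : ∃ e, (a:ℕ) = e + 1 := ⟨(a:ℕ) - 1, by omega⟩
      rw [he]
      simp only [rSym, Nat.add_sub_cancel]
      rw [min_eq_left (by omega), max_eq_right (by omega), rElt_base]
      have : (e+1).toPNat' = a := by
        apply PNat.coe_injective
        rw [toPNat'_coe (by omega)]
        omega
      rw [sn, this]
    · obtain ⟨c, hc⟩ := cs.exists_leftDescent_of_ne_one hw
      have hlen : cs.length (cs.simple c * w) < n := by
        rw [← hn]; exact hc
      set v := cs.simple c * w with hv
      have hw2 : w = cs.simple c * v := by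
        rw [hv, ← mul_assoc, cs.simple_mul_simple_self, one_mul]
      have ihv := ih (cs.length v) hlen v rfl
      have hperm : ∀ x : ℕ, permRep cs hM v x
          = Equiv.swap ((c:ℕ)-1) (c:ℕ) (permRep cs hM w x) := by
        intro x
        rw [hv, map_mul, permRep_simple cs hM, Equiv.Perm.mul_apply]
      conv_lhs => rw [hw2]
      have : cs.simple c * v * cs.simple a * (cs.simple c * v)⁻¹
          = cs.simple c * (v * cs.simple a * v⁻¹) * cs.simple c := by
        rw [mul_inv_rev, cs.inv_simple]
        simp only [mul_assoc]
      rw [this, ihv, hperm, hperm]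
      apply conj_rSym cs hM
      intro hcon
      have := (permRep cs hM w).injective hcon
      have ha := a.one_le
      omega
end Aux2

section Aux3
/-- real-valued indicator -/
noncomputable def ind (P : Prop) [Decidable P] : ℝ := if P then 1 else 0

/-- the vector with coordinates `[p < k] - [q < k]`; for `p < q` this is the
root `α_{p+1} + ... + α_q`. -/
noncomputable def xiV (p q : ℕ) : V ℕ+ :=
  (∑ k ∈ Finset.Ioc p q, sroot k.toPNat') - (∑ k ∈ Finset.Ioc q p, sroot k.toPNat')

lemma sum_sroot_apply (S : Finset ℕ) (hS : ∀ k ∈ S, 1 ≤ k) (m : ℕ+) :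
    (∑ k ∈ S, sroot k.toPNat' : V ℕ+) m = if (m:ℕ) ∈ S then 1 else 0 := by
  rw [Finset.sum_apply']
  rw [Finset.sum_congr rfl (fun k hk => ?_)]
  · exact Finset.sum_ite_eq' S ((m:ℕ)) (fun _ => (1:ℝ))
  · show (sroot k.toPNat' : V ℕ+) m = if k = (m:ℕ) then 1 else 0
    rw [sroot, Finsupp.single_apply]
    congr 1
    simp only [eq_iff_iff]
    constructor
    · intro h
      rw [← toPNat'_coe (hS k hk), h]
    · intro h
      apply PNat.coe_injective
      rw [toPNat'_coe (hS k hk), h]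

lemma xi_apply (p q : ℕ) (m : ℕ+) :
    xiV p q m = ind (p < (m:ℕ)) - ind (q < (m:ℕ)) := by
  rw [xiV, Finsupp.sub_apply,
    sum_sroot_apply _ (fun k hk => by simp only [Finset.mem_Ioc] at hk; omega),
    sum_sroot_apply _ (fun k hk => by simp only [Finset.mem_Ioc] at hk; omega)]
  simp only [Finset.mem_Ioc, ind]
  have hm : 1 ≤ (m:ℕ) := m.one_le
  split_ifs <;> first | (exfalso; omega) | norm_num

lemma xi_sroot {n : ℕ} (h : 1 ≤ n) : xiV (n-1) n = sroot n.toPNat' := by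
  ext m
  rw [xi_apply, sroot, Finsupp.single_apply]
  have hm : 1 ≤ (m:ℕ) := m.one_le
  have : (n.toPNat' = m) ↔ (n = (m:ℕ)) := by
    constructor
    · intro hh; rw [← toPNat'_coe h, hh]
    · intro hh; apply PNat.coe_injective; rw [toPNat'_coe h, hh]
  rw [if_congr this rfl rfl]
  simp only [ind]
  split_ifs <;> first | (exfalso; omega) | norm_num

lemma ind_swap_lt {c : ℕ} (hc : 1 ≤ c) (x m : ℕ) :
    ind (Equiv.swap (c-1) c x < m)
      = ind (x < m) + (ind (x < c-1) + ind (x < c+1) - 2 * ind (x < c)) * ind (c = m) := by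
  simp only [ind, Equiv.swap_apply_def]
  split_ifs <;> first | (exfalso; omega) | norm_num

/-- transfer lemma for indicator equations -/
lemma ind_transfer {P Q P' Q' : Prop} [Decidable P] [Decidable Q] [Decidable P'] [Decidable Q']
    (h : ind P - ind Q = ind P' - ind Q') (hP : P) (hQ : ¬Q) : P' ∧ ¬Q' := by
  simp only [ind] at h
  split_ifs at h <;> first | exact ⟨by assumption, by assumption⟩ | tauto | (exfalso; norm_num at h)

lemma xi_coord_eq {p q p' q' : ℕ} (h : xiV p q = xiV p' q') (k : ℕ) (hk : 1 ≤ k) :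
    ind (p < k) - ind (q < k) = ind (p' < k) - ind (q' < k) := by
  have := DFunLike.congr_fun h (⟨k, hk⟩ : ℕ+)
  exact (xi_apply p q ⟨k, hk⟩).symm.trans (this.trans (xi_apply p' q' ⟨k, hk⟩))

lemma xi_inj {p q p' q' : ℕ} (hpq : p < q) (h2 : p' ≠ q') (h : xiV p q = xiV p' q') :
    p = p' ∧ q = q' := by
  -- first: p' < q'
  have h1 := xi_coord_eq h (p+1) (by omega)
  have hp'q' : p' < q' := by
    rcases lt_or_gt_of_ne h2 with hh | hh
    · exact hh
    · exfalso
      have := ind_transfer h1 (by omega) (by omega)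
      omega
  have hpp := ind_transfer h1 (by omega) (by omega)
  have h2' := xi_coord_eq h (p'+1) (by omega)
  have hpp' := ind_transfer ((by rw [h2'] : ind (p' < p'+1) - ind (q' < p'+1)
      = ind (p < p'+1) - ind (q < p'+1))) (by omega) (by omega)
  have hq := xi_coord_eq h q (by omega)
  have hqq := ind_transfer hq (by omega) (by omega)
  have hq' := xi_coord_eq h q' (by omega)
  have hqq' := ind_transfer ((by rw [hq'] : ind (p' < q') - ind (q' < q')
      = ind (p < q') - ind (q < q'))) (by omega) (by omega)
  omega
end Aux3

section Aux4
variable {B W : Type*} [Group W]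
variable {M : CoxeterMatrix ℕ+} (cs : CoxeterSystem M W) (hM : AinfMatrix M)

include hM in
lemma kco_eval (i c : ℕ+) :
    (if M i c = 0 then (-1:ℝ) else -Real.cos (Real.pi / (M i c : ℝ)))
      = (if i = c then 1 else
          if (i:ℕ)+1 = (c:ℕ) ∨ (c:ℕ)+1 = (i:ℕ) then -(1/2) else 0) := by
  rw [hM i c]
  by_cases h1 : i = c
  · rw [if_pos h1, if_pos h1]
    norm_num
  · rw [if_neg h1, if_neg h1]
    by_cases h2 : (i:ℕ)+1 = (c:ℕ) ∨ (c:ℕ)+1 = (i:ℕ)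
    · rw [if_pos h2, if_pos h2]
      norm_num [Real.cos_pi_div_three]
    · rw [if_neg h2, if_neg h2]
      norm_num [Real.cos_pi_div_two]

include hM in
lemma form_sroot_sroot (k c : ℕ+) :
    form M (sroot k) (sroot c)
      = (if k = c then 1 else
          if (k:ℕ)+1 = (c:ℕ) ∨ (c:ℕ)+1 = (k:ℕ) then -(1/2) else 0) := by
  rw [form, sroot, sroot]
  rw [Finsupp.sum_single_index (by simp)]
  rw [Finsupp.sum_single_index (by ring)]
  rw [one_mul, one_mul, kco_eval hM]

lemma form_sum_left (S : Finset ℕ) (g : ℕ → V ℕ+) (y : V ℕ+) :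
    form M (∑ k ∈ S, g k) y = ∑ k ∈ S, form M (g k) y := by
  classical
  unfold form
  apply Eq.symm
  apply Finsupp.sum_finset_sum_index
  · intro i
    simp
  · intro i b1 b2
    rw [← Finsupp.sum_add]
    apply Finsupp.sum_congr
    intro j _
    ring

lemma form_sub_left (x x' y : V ℕ+) :
    form M (x - x') y = form M x y - form M x' y := by
  unfold form
  apply Finsupp.sum_sub_index
  intro i b1 b2
  rw [← Finsupp.sum_sub]
  apply Finsupp.sum_congr
  intro j _
  ring

lemma sum_ind_eq (S : Finset ℕ) (t : ℕ) :
    (∑ k ∈ S, ind (k = t)) = ind (t ∈ S) := by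
  simp only [ind]
  exact Finset.sum_ite_eq' S t (fun _ => (1:ℝ))

include hM in
lemma sum_kco (p q : ℕ) (c : ℕ+) :
    (∑ k ∈ Finset.Ioc p q, form M (sroot k.toPNat') (sroot c))
      = ind ((c:ℕ) ∈ Finset.Ioc p q) - (1/2) * ind ((c:ℕ)-1 ∈ Finset.Ioc p q)
        - (1/2) * ind ((c:ℕ)+1 ∈ Finset.Ioc p q) := by
  have hc : 1 ≤ (c:ℕ) := c.one_le
  have step : ∀ k ∈ Finset.Ioc p q, form M (sroot k.toPNat') (sroot c)
      = ind (k = (c:ℕ)) - (1/2) * ind (k = (c:ℕ)-1) - (1/2) * ind (k = (c:ℕ)+1) := by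
    intro k hk
    simp only [Finset.mem_Ioc] at hk
    have hk1 : 1 ≤ k := by omega
    rw [form_sroot_sroot hM]
    have e1 : (k.toPNat' = c) ↔ (k = (c:ℕ)) := by
      constructor
      · intro h; rw [← toPNat'_coe hk1, h]
      · intro h; apply PNat.coe_injective; rw [toPNat'_coe hk1, h]
    have e2 : ((k.toPNat' : ℕ)+1 = (c:ℕ) ∨ (c:ℕ)+1 = (k.toPNat' : ℕ))
        ↔ (k+1 = (c:ℕ) ∨ (c:ℕ)+1 = k) := by rw [toPNat'_coe hk1]
    rw [if_congr e1 rfl rfl, if_congr e2 rfl rfl]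
    simp only [ind]
    split_ifs <;> first | (exfalso; omega) | norm_num
  rw [Finset.sum_congr rfl step]
  rw [Finset.sum_sub_distrib, Finset.sum_sub_distrib, ← Finset.mul_sum, ← Finset.mul_sum]
  rw [sum_ind_eq, sum_ind_eq, sum_ind_eq]

lemma ind_Ioc_sub (p q x : ℕ) :
    ind (x ∈ Finset.Ioc p q) - ind (x ∈ Finset.Ioc q p) = ind (p < x) - ind (q < x) := by
  simp only [ind, Finset.mem_Ioc]
  split_ifs <;> first | (exfalso; omega) | norm_num

include hM in
lemma form_xi (p q : ℕ) (c : ℕ+) :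
    2 * form M (xiV p q) (sroot c)
      = (2 * ind (p < (c:ℕ)) - ind (p < (c:ℕ)-1) - ind (p < (c:ℕ)+1))
        - (2 * ind (q < (c:ℕ)) - ind (q < (c:ℕ)-1) - ind (q < (c:ℕ)+1)) := by
  have hc : 1 ≤ (c:ℕ) := c.one_le
  rw [xiV, form_sub_left, form_sum_left, form_sum_left, sum_kco hM, sum_kco hM]
  have i1 := ind_Ioc_sub p q ((c:ℕ))
  have i2 := ind_Ioc_sub p q ((c:ℕ)-1)
  have i3 := ind_Ioc_sub p q ((c:ℕ)+1)
  nlinarith [i1, i2, i3]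

variable (rho : W →* (V ℕ+ ≃ₗ[ℝ] V ℕ+))

include hM in
lemma rho_simple_xi (hrho : IsGeomRep M cs rho) (c : ℕ+) (p q : ℕ) :
    rho (cs.simple c) (xiV p q)
      = xiV (Equiv.swap ((c:ℕ)-1) (c:ℕ) p) (Equiv.swap ((c:ℕ)-1) (c:ℕ) q) := by
  have hc : 1 ≤ (c:ℕ) := c.one_le
  rw [hrho c (xiV p q)]
  ext m
  rw [Finsupp.sub_apply, Finsupp.smul_apply, xi_apply, xi_apply, smul_eq_mul]
  rw [ind_swap_lt hc, ind_swap_lt hc]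
  have hsing : (sroot c : V ℕ+) m = ind ((c:ℕ) = (m:ℕ)) := by
    rw [sroot, Finsupp.single_apply, ind]
    congr 1
    simp only [eq_iff_iff]
    exact ⟨fun h => by rw [h], fun h => PNat.coe_injective h⟩
  rw [hsing, form_xi hM]
  ring

include hM in
lemma rho_w_xi (hrho : IsGeomRep M cs rho) (w : W) (p q : ℕ) :
    rho w (xiV p q) = xiV (permRep cs hM w p) (permRep cs hM w q) := by
  induction w using cs.simple_induction_left with
  | one => simp
  | mul_simple_left w i ih =>
    rw [map_mul, map_mul]
    have : (rho (cs.simple i) * rho w) (xiV p q) = rho (cs.simple i) (rho w (xiV p q)) := rfl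
    rw [this, ih, rho_simple_xi cs hM rho hrho]
    congr 1 <;> rw [permRep_simple cs hM] <;> rfl
end Aux4

section Aux5
def fN (t : ℕ) : Equiv.Perm ℕ := Equiv.swap (t-1) t

def gPerm (a n : ℕ) : Equiv.Perm ℕ := ((List.range n).map (fun l => fN (a - l))).prod

/-- suffix products of blocks -/
def EPerm (b n : ℕ) : Equiv.Perm ℕ := ((List.range n).map (fun t => gPerm (b+t) (n-t))).prod

lemma gPerm_apply : ∀ (n a : ℕ), n ≤ a → ∀ x : ℕ,
    gPerm a n x = if x = a - n then a else if a - n < x ∧ x ≤ a then x - 1 else x := by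
  intro n
  induction n with
  | zero =>
    intro a ha x
    simp only [gPerm, List.range_zero, List.map_nil, List.prod_nil, Equiv.Perm.coe_one, id_eq]
    split_ifs <;> omega
  | succ n ih =>
    intro a ha x
    have hrec : gPerm a (n+1) = gPerm a n * fN (a - n) := by
      rw [gPerm, List.range_succ, List.map_append, List.prod_append,
        List.map_singleton, List.prod_singleton, ← gPerm]
    rw [hrec, Equiv.Perm.mul_apply, fN, Equiv.swap_apply_def]
    by_cases h1 : x = a - n - 1
    · rw [if_pos h1, ih a (by omega) (a-n)]
      split_ifs <;> omega
    · rw [if_neg h1]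
      by_cases h2 : x = a - n
      · rw [if_pos h2, ih a (by omega) (a-n-1)]
        split_ifs <;> omega
      · rw [if_neg h2, ih a (by omega) x]
        split_ifs <;> omega

lemma EPerm_succ (b n : ℕ) :
    EPerm b (n+1) = gPerm b (n+1) * EPerm (b+1) n := by
  rw [EPerm, List.range_succ_eq_map, List.map_cons, List.prod_cons, List.map_map]
  congr 1
  rw [EPerm]
  congr 1
  apply List.map_congr_left
  intro t ht
  simp only [Function.comp_apply]
  rw [show b+(t+1) = b+1+t by omega, show n+1-(t+1) = n-t by omega]

lemma EPerm_apply : ∀ (n i m : ℕ), i - m = n → m ≤ i → ∀ x : ℕ,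
    EPerm (i+m) n x = if 2*m ≤ x ∧ x ≤ 2*i then
      (if x % 2 = 0 then i + x/2 else m + (x-1)/2) else x := by
  intro n
  induction n with
  | zero =>
    intro i m hk hm x
    have : m = i := by omega
    rw [EPerm]
    simp only [List.range_zero, List.map_nil, List.prod_nil, Equiv.Perm.coe_one, id_eq]
    split_ifs <;> omega
  | succ n ih =>
    intro i m hk hm x
    have hmi : m < i := by omega
    rw [EPerm_succ, Equiv.Perm.mul_apply, show i+m+1 = i+(m+1) by omega,
      ih i (m+1) (by omega) (by omega) x]
    have hga := gPerm_apply (n+1) (i+m) (by omega)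
    by_cases c1 : 2*(m+1) ≤ x ∧ x ≤ 2*i
    · rw [if_pos c1]
      by_cases c2 : x % 2 = 0
      · rw [if_pos c2, hga]
        split_ifs <;> omega
      · rw [if_neg c2, hga]
        split_ifs <;> omega
    · rw [if_neg c1, hga]
      split_ifs <;> omega

variable {W : Type*} [Group W]
variable {M : CoxeterMatrix ℕ+} (cs : CoxeterSystem M W) (hM : AinfMatrix M)

include hM in
lemma permRep_uElt (i : ℕ) : permRep cs hM (uElt cs i) = EPerm i i := by
  rw [uElt, map_list_prod, List.map_map, EPerm]
  congr 1
  apply List.map_congr_left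
  intro k hk
  simp only [List.mem_range] at hk
  simp only [Function.comp_apply]
  rw [map_list_prod, List.map_map]
  rw [gPerm]
  congr 1
  apply List.map_congr_left
  intro l hl
  simp only [List.mem_range] at hl
  simp only [Function.comp_apply]
  rw [permRep_simple cs hM, toPNat'_coe (by omega), fN]

include hM in
lemma permRep_uElt_apply_even (i j : ℕ) (h1 : 1 ≤ j) (hji : j ≤ i) :
    permRep cs hM (uElt cs i) (2*j-2) = i+j-1
      ∧ permRep cs hM (uElt cs i) (2*j) = i+j := by
  have := EPerm_apply i i 0 (by omega) (by omega)
  rw [show i + 0 = i by omega] at this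
  rw [permRep_uElt cs hM, this, this]
  constructor
  · split_ifs <;> omega
  · split_ifs <;> omega

lemma sroot_toPNat_apply {n : ℕ} (h : 1 ≤ n) (m : ℕ+) :
    (sroot n.toPNat' : V ℕ+) m = ind (n = (m:ℕ)) := by
  rw [sroot, Finsupp.single_apply, ind]
  congr 1
  simp only [eq_iff_iff]
  constructor
  · intro hh; rw [← toPNat'_coe h, hh]
  · intro hh; apply PNat.coe_injective; rw [toPNat'_coe h, hh]

lemma beta_eq {j : ℕ} (h : 1 ≤ j) : beta j = xiV (2*j-2) (2*j) := by
  ext m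
  rw [beta, Finsupp.add_apply, xi_apply,
    sroot_toPNat_apply (by omega), sroot_toPNat_apply (by omega)]
  have hm : 1 ≤ (m:ℕ) := m.one_le
  simp only [ind]
  split_ifs <;> first | (exfalso; omega) | norm_num
end Aux5

/-- In type `A∞`, `u_i • β_j = α_{j+i}` and `u_i s_{β_j} u_i⁻¹ = s_{j+i}` for
`1 ≤ j ≤ i`. -/
theorem stmt15 {W : Type*} [Group W] (M : CoxeterMatrix ℕ+) (hM : AinfMatrix M)
    (cs : CoxeterSystem M W) (rho : W →* (V ℕ+ ≃ₗ[ℝ] V ℕ+))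
    (hrho : IsGeomRep M cs rho) (i j : ℕ) (h1 : 1 ≤ j) (hji : j ≤ i) :
    rho (uElt cs i) (beta j) = sroot (j + i).toPNat' ∧
    ∀ t : W, ReflOf cs rho (beta j) t →
      uElt cs i * t * (uElt cs i)⁻¹ = cs.simple (j + i).toPNat' := by
  obtain ⟨hs1, hs2⟩ := permRep_uElt_apply_even cs hM i j h1 hji
  have hbeta : beta j = xiV (2*j-2) (2*j) := beta_eq h1
  have part1 : rho (uElt cs i) (beta j) = sroot (j + i).toPNat' := by
    rw [hbeta, rho_w_xi cs hM rho hrho, hs1, hs2]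
    rw [show i+j-1 = (j+i)-1 by omega, show i+j = j+i by omega]
    exact xi_sroot (by omega)
  refine ⟨part1, ?_⟩
  rintro t ⟨w, a, hwa, rfl⟩
  have ha1 : 1 ≤ (a:ℕ) := a.one_le
  -- identify the permutation values of w at a-1, a
  have hsra : (sroot a : V ℕ+) = xiV ((a:ℕ)-1) (a:ℕ) := by
    rw [xi_sroot ha1]
    congr 1
    simp
  have hxieq : xiV (2*j-2) (2*j)
      = xiV (permRep cs hM w ((a:ℕ)-1)) (permRep cs hM w (a:ℕ)) := by
    rw [← rho_w_xi cs hM rho hrho, ← hsra, hwa, hbeta]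
  have hne : permRep cs hM w ((a:ℕ)-1) ≠ permRep cs hM w (a:ℕ) := by
    intro hcon
    have := (permRep cs hM w).injective hcon
    omega
  obtain ⟨hp, hq⟩ := xi_inj (by omega) hne hxieq
  -- the reflection t equals the canonical interval word
  have hT : w * cs.simple a * w⁻¹ = rSym cs (2*j-2) (2*j) := by
    rw [conj_simple_eq_rSym cs hM w a, ← hp, ← hq]
  -- and so does u⁻¹ s_{j+i} u
  set u := uElt cs i with hu
  have hbcoe : (((j+i).toPNat' : ℕ+) : ℕ) = j + i := toPNat'_coe (by omega)
  have hperminv1 : permRep cs hM u⁻¹ ((((j+i).toPNat' : ℕ+) : ℕ) - 1) = 2*j-2 := by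
    rw [hbcoe, map_inv]
    have : (permRep cs hM u) (2*j-2) = j+i-1 := by rw [hs1]; omega
    rw [← this]
    exact Equiv.symm_apply_apply _ _
  have hperminv2 : permRep cs hM u⁻¹ (((j+i).toPNat' : ℕ+) : ℕ) = 2*j := by
    rw [hbcoe, map_inv]
    have : (permRep cs hM u) (2*j) = j+i := by rw [hs2]; omega
    rw [← this]
    exact Equiv.symm_apply_apply _ _
  have hU : u⁻¹ * cs.simple ((j+i).toPNat') * (u⁻¹)⁻¹ = rSym cs (2*j-2) (2*j) := by
    rw [conj_simple_eq_rSym cs hM u⁻¹ ((j+i).toPNat'), hperminv1, hperminv2]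
  rw [hT, ← hU]
  group


end CoxPaper
end
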